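/- arXiv:1904.01503 — 2 statements merged into one kernel-verified Lean document; each statement's English description precedes it below -/
import Mathlib

section
/- Let f : ℝ → ℝ be a polynomial with rational coefficients such that both f and 1 - f are strictly positive on the closed interval [0,1]. Then there exists n ≥ 0 and coefficients p_0, ..., p_n ∈ [0,1] such that f(x) = Σ_{k=0}^n p_k · C(n,k) · x^{n-k} · (1-x)^k. -/
open Finset

lemma aux_nat (n k j : ℕ) (hkn : k ≤ n) (hjk : j ≤ k) :
    n.choose k * k.descFactorial j = n.descFactorial j * (n - j).choose (k - j) := by
  rw [Nat.descFactorial_eq_factorial_mul_choose, Nat.descFactorial_eq_factorial_mul_choose,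
    ← Nat.mul_assoc, Nat.mul_comm (n.choose k), Nat.mul_assoc, Nat.choose_mul hjk,
    Nat.mul_assoc]

lemma aux_sum (n j : ℕ) (hj : j ≤ n) (x : ℝ) :
    ∑ k ∈ range (n + 1),
      ((k.descFactorial j : ℝ) / (n.descFactorial j)) * (n.choose k) * x ^ k * (1 - x) ^ (n - k)
      = x ^ j := by
  have hd : (0:ℝ) < (n.descFactorial j : ℝ) := by
    have : n.descFactorial j ≠ 0 := by
      intro h; exact absurd (Nat.descFactorial_eq_zero_iff_lt.mp h) (by omega)
    exact_mod_cast Nat.pos_of_ne_zero this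
  have key : ∑ k ∈ range (n + 1),
      ((k.descFactorial j : ℝ)) * (n.choose k) * x ^ k * (1 - x) ^ (n - k)
      = (n.descFactorial j : ℝ) * x ^ j := by
    have step1 : ∑ k ∈ range (n + 1),
        ((k.descFactorial j : ℝ)) * (n.choose k) * x ^ k * (1 - x) ^ (n - k)
        = ∑ k ∈ Ico j (n + 1),
        ((k.descFactorial j : ℝ)) * (n.choose k) * x ^ k * (1 - x) ^ (n - k) := by
      refine (Finset.sum_subset (fun k hk => ?_) (fun k hk hk' => ?_)).symm
      · simp only [mem_Ico, mem_range] at *; omega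
      · simp only [mem_Ico, mem_range] at *
        have : k.descFactorial j = 0 := Nat.descFactorial_eq_zero_iff_lt.mpr (by omega)
        simp [this]
    have step2 : ∀ k ∈ Ico j (n + 1),
        ((k.descFactorial j : ℝ)) * (n.choose k) * x ^ k * (1 - x) ^ (n - k)
        = (n.descFactorial j : ℝ) * (((n - j).choose (k - j) : ℝ) * x ^ k * (1 - x) ^ (n - k)) := by
      intro k hk
      simp only [mem_Ico] at hk
      have h := aux_nat n k j (by omega) hk.1
      have h' : ((n.choose k : ℝ)) * (k.descFactorial j : ℝ)
          = (n.descFactorial j : ℝ) * ((n - j).choose (k - j) : ℝ) := by exact_mod_cast h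
      linear_combination (x ^ k * (1 - x) ^ (n - k)) * h'
    rw [step1, Finset.sum_congr rfl step2, ← Finset.mul_sum]
    congr 1
    rw [Finset.sum_Ico_eq_sum_range]
    have hr : n + 1 - j = (n - j) + 1 := by omega
    rw [hr]
    have step3 : ∀ i ∈ range ((n - j) + 1),
        ((n - j).choose (j + i - j) : ℝ) * x ^ (j + i) * (1 - x) ^ (n - (j + i))
        = x ^ j * (x ^ i * (1 - x) ^ ((n - j) - i) * ((n - j).choose i)) := by
      intro i hi
      simp only [mem_range] at hi
      have h1 : j + i - j = i := by omega
      have h2 : n - (j + i) = (n - j) - i := by omega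
      rw [h1, h2, pow_add]; ring
    rw [Finset.sum_congr rfl step3, ← Finset.mul_sum, ← add_pow]
    simp
  calc ∑ k ∈ range (n + 1),
      ((k.descFactorial j : ℝ) / (n.descFactorial j)) * (n.choose k) * x ^ k * (1 - x) ^ (n - k)
      = (∑ k ∈ range (n + 1),
        ((k.descFactorial j : ℝ)) * (n.choose k) * x ^ k * (1 - x) ^ (n - k)) / (n.descFactorial j) := by
        rw [Finset.sum_div]; exact Finset.sum_congr rfl (fun k _ => by ring)
    _ = x ^ j := by rw [key]; field_simp

lemma aux_prod_diff (u v : ℕ → ℝ) (j : ℕ)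
    (hu : ∀ i, i < j → u i ∈ Set.Icc (0:ℝ) 1) (hv : ∀ i, i < j → v i ∈ Set.Icc (0:ℝ) 1) :
    |∏ i ∈ range j, u i - ∏ i ∈ range j, v i| ≤ ∑ i ∈ range j, |u i - v i| := by
  induction j with
  | zero => simp
  | succ j ih =>
    have hu' := fun i hi => hu i (Nat.lt_succ_of_lt hi)
    have hv' := fun i hi => hv i (Nat.lt_succ_of_lt hi)
    have ihj := ih hu' hv'
    rw [prod_range_succ, prod_range_succ, sum_range_succ]
    have hPv0 : (0:ℝ) ≤ ∏ i ∈ range j, v i :=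
      Finset.prod_nonneg (fun i hi => (hv' i (mem_range.mp hi)).1)
    have hPv1 : ∏ i ∈ range j, v i ≤ 1 :=
      Finset.prod_le_one (fun i hi => (hv' i (mem_range.mp hi)).1)
        (fun i hi => (hv' i (mem_range.mp hi)).2)
    have huj := hu j (Nat.lt_succ_self j)
    calc |(∏ i ∈ range j, u i) * u j - (∏ i ∈ range j, v i) * v j|
        = |((∏ i ∈ range j, u i) - ∏ i ∈ range j, v i) * u j
            + (∏ i ∈ range j, v i) * (u j - v j)| := by ring_nf
      _ ≤ |((∏ i ∈ range j, u i) - ∏ i ∈ range j, v i) * u j|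
            + |(∏ i ∈ range j, v i) * (u j - v j)| := abs_add_le _ _
      _ ≤ |(∏ i ∈ range j, u i) - ∏ i ∈ range j, v i| * 1 + 1 * |u j - v j| := by
          rw [abs_mul, abs_mul]
          gcongr
          · rw [abs_of_nonneg huj.1]; exact huj.2
          · rw [abs_of_nonneg hPv0]; exact hPv1
      _ ≤ (∑ i ∈ range j, |u i - v i|) + |u j - v j| := by
          rw [mul_one, one_mul]; exact add_le_add_left ihj _

lemma aux_factor (n d k i : ℕ) (hk : k ≤ n) (hi : i < d) (hd : d < n) :
    |((k - i : ℕ) : ℝ) / ((n - i : ℕ) : ℝ) - (k : ℝ) / n| ≤ (d : ℝ) / ((n : ℝ) - d) := by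
  have hn : (0:ℝ) < n := by exact_mod_cast (by omega : 0 < n)
  have hnd : (0:ℝ) < (n : ℝ) - d := by
    have : (d:ℝ) < n := by exact_mod_cast hd
    linarith
  have hiR : (i:ℝ) < d := by exact_mod_cast hi
  have hdR : (d:ℝ) < n := by exact_mod_cast hd
  have hkR : (k:ℝ) ≤ n := by exact_mod_cast hk
  by_cases hik : i ≤ k
  · have hki : ((k - i : ℕ) : ℝ) = (k:ℝ) - i := by
      rw [Nat.cast_sub hik]
    have hniR : ((n - i : ℕ) : ℝ) = (n:ℝ) - i := by
      rw [Nat.cast_sub (by omega : i ≤ n)]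
    rw [hki, hniR]
    have hiR0 : (0:ℝ) ≤ i := by positivity
    have hkR0 : (0:ℝ) ≤ k := by positivity
    have hnipos : (0:ℝ) < (n:ℝ) - i := by linarith
    rw [div_sub_div _ _ (by linarith) (by linarith), abs_div]
    rw [abs_of_nonneg (by positivity : (0:ℝ) ≤ ((n:ℝ) - i) * n)]
    rw [div_le_div_iff₀ (by positivity) hnd]
    have hnum : ((k:ℝ) - i) * n - ((n:ℝ) - i) * k = -((i:ℝ) * ((n:ℝ) - k)) := by ring
    rw [hnum, abs_neg, abs_of_nonneg (by nlinarith : (0:ℝ) ≤ (i:ℝ) * ((n:ℝ) - k))]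
    nlinarith [mul_nonneg hiR0 (sub_nonneg.mpr hkR), mul_nonneg hiR0 hn.le,
      mul_le_mul_of_nonneg_right hiR.le hn.le,
      mul_nonneg (mul_nonneg hiR0 (sub_nonneg.mpr hkR)) hnd.le]
  · have h0 : (k - i : ℕ) = 0 := by omega
    rw [h0]
    simp only [Nat.cast_zero, zero_div, zero_sub, abs_neg]
    have hkd : (k:ℝ) < d := by
      have : k < d := by omega
      exact_mod_cast this
    rw [abs_of_nonneg (by positivity)]
    rw [div_le_div_iff₀ hn hnd]
    nlinarith
lemma aux_ratio (n d k j : ℕ) (hk : k ≤ n) (hj : j ≤ d) (hd : d < n) :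
    |(k.descFactorial j : ℝ) / (n.descFactorial j) - ((k:ℝ) / n) ^ j|
      ≤ (d : ℝ) * ((d : ℝ) / ((n : ℝ) - d)) := by
  have hn : (0:ℝ) < n := by exact_mod_cast (by omega : 0 < n)
  have hnd : (0:ℝ) < (n : ℝ) - d := by
    have : (d:ℝ) < n := by exact_mod_cast hd
    linarith
  set u : ℕ → ℝ := fun i => ((k - i : ℕ) : ℝ) / ((n - i : ℕ) : ℝ) with hu_def
  set v : ℕ → ℝ := fun i => (k : ℝ) / n with hv_def
  have hprod : (k.descFactorial j : ℝ) / (n.descFactorial j) = ∏ i ∈ range j, u i := by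
    rw [Nat.descFactorial_eq_prod_range, Nat.descFactorial_eq_prod_range]
    push_cast
    rw [Finset.prod_div_distrib]
  have hpow : ((k:ℝ) / n) ^ j = ∏ i ∈ range j, v i := by
    rw [Finset.prod_const, card_range]
  have hu : ∀ i, i < j → u i ∈ Set.Icc (0:ℝ) 1 := by
    intro i hi
    have hni : (0:ℝ) < ((n - i : ℕ) : ℝ) := by exact_mod_cast (by omega : 0 < n - i)
    constructor
    · positivity
    · rw [div_le_one hni]
      exact_mod_cast (by omega : k - i ≤ n - i)
  have hv : ∀ i, i < j → v i ∈ Set.Icc (0:ℝ) 1 := by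
    intro i _
    constructor
    · positivity
    · rw [div_le_one hn]; exact_mod_cast hk
  rw [hprod, hpow]
  calc |∏ i ∈ range j, u i - ∏ i ∈ range j, v i| ≤ ∑ i ∈ range j, |u i - v i| :=
        aux_prod_diff u v j hu hv
    _ ≤ ∑ _i ∈ range j, (d : ℝ) / ((n : ℝ) - d) := by
        refine Finset.sum_le_sum (fun i hi => ?_)
        exact aux_factor n d k i hk (by simp only [mem_range] at hi; omega) hd
    _ = (j : ℝ) * ((d : ℝ) / ((n : ℝ) - d)) := by rw [Finset.sum_const, card_range]; ring
    _ ≤ (d : ℝ) * ((d : ℝ) / ((n : ℝ) - d)) := by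
        have : (j:ℝ) ≤ d := by exact_mod_cast hj
        have h0 : (0:ℝ) ≤ (d : ℝ) / ((n : ℝ) - d) := by positivity
        nlinarith

/-- Bernstein representation: if `f ∈ ℚ[x]` satisfies `0 < f < 1` on `[0,1]`
(i.e. both `f` and `1 - f` are strictly positive on `[0,1]`), then
`f = ∑ p_k C(n,k) x^{n-k} (1-x)^k` with all `p_k ∈ [0,1]`. -/
theorem bernstein_representation (f : Polynomial ℚ)
    (h1 : ∀ x : ℝ, x ∈ Set.Icc (0:ℝ) 1 → 0 < Polynomial.aeval x f)
    (h2 : ∀ x : ℝ, x ∈ Set.Icc (0:ℝ) 1 → Polynomial.aeval x f < 1) :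
    ∃ (n : ℕ) (p : Fin (n + 1) → ℝ), (∀ k, p k ∈ Set.Icc (0:ℝ) 1) ∧
      ∀ x : ℝ, Polynomial.aeval x f =
        ∑ k : Fin (n + 1),
          p k * (n.choose (k : ℕ)) * x ^ (n - (k : ℕ)) * (1 - x) ^ (k : ℕ) := by
  classical
  set F : Polynomial ℝ := f.map (algebraMap ℚ ℝ) with hF
  have hFg : ∀ x : ℝ, Polynomial.aeval x f = F.eval x := by
    intro x
    rw [hF, Polynomial.eval_map, Polynomial.aeval_def]
  have hF1 : ∀ x ∈ Set.Icc (0:ℝ) 1, 0 < F.eval x := fun x hx => hFg x ▸ h1 x hx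
  have hF2 : ∀ x ∈ Set.Icc (0:ℝ) 1, F.eval x < 1 := fun x hx => hFg x ▸ h2 x hx
  set d : ℕ := F.natDegree with hd_def
  set a : ℕ → ℝ := fun j => F.coeff j with ha_def
  -- min and max
  have hcont : ContinuousOn (fun x => F.eval x) (Set.Icc (0:ℝ) 1) :=
    F.continuous.continuousOn
  obtain ⟨x₀, hx₀, hmin⟩ := isCompact_Icc.exists_isMinOn
    (Set.nonempty_Icc.mpr zero_le_one) hcont
  obtain ⟨x₁, hx₁, hmax⟩ := isCompact_Icc.exists_isMaxOn
    (Set.nonempty_Icc.mpr zero_le_one) hcont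
  set δ : ℝ := F.eval x₀ with hδ
  set m : ℝ := F.eval x₁ with hm
  have hδpos : 0 < δ := hF1 x₀ hx₀
  have hm1 : m < 1 := hF2 x₁ hx₁
  set ε : ℝ := min δ (1 - m) with hε
  have hεpos : 0 < ε := lt_min hδpos (by linarith)
  set A : ℝ := ∑ j ∈ range (d + 1), |a j| with hA
  have hA0 : 0 ≤ A := Finset.sum_nonneg (fun j _ => abs_nonneg _)
  obtain ⟨n, hn⟩ := exists_nat_gt ((d:ℝ) + 1 + A * d * d / ε)
  have hAdd : 0 ≤ A * d * d / ε := by positivity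
  have hdn : d < n := by
    have : (d:ℝ) < n := by linarith
    exact_mod_cast this
  have hnd : (0:ℝ) < (n:ℝ) - d := by
    have : (d:ℝ) < n := by exact_mod_cast hdn
    linarith
  have hnpos : (0:ℝ) < n := by
    have : (0:ℝ) ≤ d := by positivity
    linarith
  have hbound : A * ((d:ℝ) * ((d:ℝ) / ((n:ℝ) - d))) < ε := by
    have heq : A * ((d:ℝ) * ((d:ℝ) / ((n:ℝ) - d))) = (A * d * d) / ((n:ℝ) - d) := by
      field_simp
    rw [heq, div_lt_iff₀ hnd]
    have hcan : A * (d:ℝ) * d / ε * ε = A * d * d := div_mul_cancel₀ _ hεpos.ne'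
    nlinarith [mul_lt_mul_of_pos_left (by linarith : (d:ℝ) + 1 + A * d * d / ε < n) hεpos]
  -- the Bernstein coefficients
  set b : ℕ → ℝ := fun k =>
    ∑ j ∈ range (d + 1), a j * ((k.descFactorial j : ℝ) / (n.descFactorial j)) with hb_def
  have heval : ∀ y : ℝ, F.eval y = ∑ j ∈ range (d + 1), a j * y ^ j := by
    intro y
    rw [Polynomial.eval_eq_sum_range]
  have hberr : ∀ k, k ≤ n → |b k - F.eval ((k:ℝ) / n)| < ε := by
    intro k hk
    have h1' : b k - F.eval ((k:ℝ) / n)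
        = ∑ j ∈ range (d + 1),
            a j * ((k.descFactorial j : ℝ) / (n.descFactorial j) - ((k:ℝ) / n) ^ j) := by
      rw [heval, hb_def, ← Finset.sum_sub_distrib]
      exact Finset.sum_congr rfl (fun j _ => by ring)
    calc |b k - F.eval ((k:ℝ) / n)|
        ≤ ∑ j ∈ range (d + 1),
            |a j * ((k.descFactorial j : ℝ) / (n.descFactorial j) - ((k:ℝ) / n) ^ j)| := by
          rw [h1']; exact Finset.abs_sum_le_sum_abs _ _
      _ ≤ ∑ j ∈ range (d + 1), |a j| * ((d:ℝ) * ((d:ℝ) / ((n:ℝ) - d))) := by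
          refine Finset.sum_le_sum (fun j hj => ?_)
          rw [abs_mul]
          refine mul_le_mul_of_nonneg_left ?_ (abs_nonneg _)
          exact aux_ratio n d k j hk (by simp only [mem_range] at hj; omega) hdn
      _ = A * ((d:ℝ) * ((d:ℝ) / ((n:ℝ) - d))) := by rw [← Finset.sum_mul]
      _ < ε := hbound
  have hbmem : ∀ k, k ≤ n → b k ∈ Set.Icc (0:ℝ) 1 := by
    intro k hk
    have hkn : (k:ℝ) / n ∈ Set.Icc (0:ℝ) 1 := by
      constructor
      · positivity
      · rw [div_le_one hnpos]; exact_mod_cast hk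
    have hlo : δ ≤ F.eval ((k:ℝ) / n) := isMinOn_iff.mp hmin _ hkn
    have hhi : F.eval ((k:ℝ) / n) ≤ m := isMaxOn_iff.mp hmax _ hkn
    have herr := hberr k hk
    have h1' := abs_lt.mp herr
    constructor
    · have : ε ≤ δ := min_le_left _ _
      linarith [h1'.1]
    · have : ε ≤ 1 - m := min_le_right _ _
      linarith [h1'.2]
  refine ⟨n, fun k => b (n - (k:ℕ)), fun k => hbmem _ (by omega), fun x => ?_⟩
  -- convert the Fin sum to a range sum
  rw [Fin.sum_univ_eq_sum_range
    (fun k => b (n - k) * (n.choose k : ℝ) * x ^ (n - k) * (1 - x) ^ k)]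
  set G : ℕ → ℝ := fun mm => b mm * (n.choose mm : ℝ) * x ^ mm * (1 - x) ^ (n - mm) with hG
  have hstep : ∀ k ∈ range (n + 1),
      b (n - k) * (n.choose k : ℝ) * x ^ (n - k) * (1 - x) ^ k = G (n - k) := by
    intro k hk
    simp only [mem_range] at hk
    rw [hG]
    have h1' : n.choose (n - k) = n.choose k := Nat.choose_symm (by omega)
    have h2' : n - (n - k) = k := by omega
    simp only [h1', h2']
  rw [Finset.sum_congr rfl hstep]
  have hreflect : ∑ k ∈ range (n + 1), G (n - k) = ∑ k ∈ range (n + 1), G k := by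
    have := Finset.sum_range_reflect G (n + 1)
    simpa using this
  rw [hreflect]
  -- expand G and swap sums
  have hGexp : ∀ mm ∈ range (n + 1), G mm = ∑ j ∈ range (d + 1),
      a j * (((mm.descFactorial j : ℝ) / (n.descFactorial j)) * (n.choose mm : ℝ)
        * x ^ mm * (1 - x) ^ (n - mm)) := by
    intro mm _
    simp only [hG, hb_def]
    rw [Finset.sum_mul, Finset.sum_mul, Finset.sum_mul]
    exact Finset.sum_congr rfl (fun j _ => by ring)
  rw [Finset.sum_congr rfl hGexp, Finset.sum_comm]
  rw [hFg, heval]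
  refine Finset.sum_congr rfl (fun j hj => ?_)
  rw [← Finset.mul_sum]
  congr 1
  exact (aux_sum n j (by simp only [mem_range] at hj; omega) x).symm
end

section
/- Consider, for each n ≥ 1, the family of 2^n functions on [0,1]^n given by F_σ(v) = Π_{i=1}^n ρ_{σ(i)}(v_i) where ρ_a(t) = t and ρ_b(t) = 1−t, indexed by σ ∈ {a,b}^n. Then for every σ ∈ {a,b}^n there exists a point v_σ ∈ [0,1]^n (namely v_σ(i) = 1 if σ(i) = a and 0 otherwise) such that F_σ(v_σ) = 1 while F_{σ'}(v_σ) = 0 for all σ' ≠ σ. Consequently any set Ω ⊆ {a,b}^n such that for each v ∈ [0,1]^n some σ ∈ Ω maximizes F_σ(v) over all σ ∈ {a,b}^n must have |Ω| = 2^n. -/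
/-! Each scheduler `σ` is the strict unique maximizer at the vertex `v_σ` of the cube, where
it has value `1` and every other scheduler has a factor `0`. A set of schedulers that contains
a maximizer at every point must therefore contain every `σ`. -/

/-- The scheduler-value function of the pMDP `M_n`: scheduler `σ : Fin n → Bool`
(`true` = action `a`) has reachability probability `∏ i, ρ_{σ i}(v i)` where
`ρ_a(t) = t` and `ρ_b(t) = 1 - t`. -/
noncomputable def schedulerValue (n : ℕ) (σ : Fin n → Bool) (v : Fin n → ℝ) : ℝ :=
  ∏ i, if σ i then v i else 1 - v i

theorem Finset.eq_univ_of_forall_exists_strict_max {α X β : Type*} [Fintype α] [Preorder β]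
    (F : α → X → β) (p : X → Prop)
    (hstrict : ∀ σ, ∃ v, p v ∧ ∀ σ', σ' ≠ σ → F σ' v < F σ v)
    (Ω : Finset α) (hΩ : ∀ v, p v → ∃ σ ∈ Ω, ∀ σ', F σ' v ≤ F σ v) :
    Ω = Finset.univ := by
  refine Finset.eq_univ_of_forall fun σ => ?_
  obtain ⟨v, hv, hmax⟩ := hstrict σ
  obtain ⟨τ, hτΩ, hτ⟩ := hΩ v hv
  by_cases hτσ : τ = σ
  · exact hτσ ▸ hτΩ
  · exact absurd (hτ σ) (hmax τ hτσ).not_ge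

def vertex {n : ℕ} (σ : Fin n → Bool) : Fin n → ℝ :=
  fun i => if σ i then 1 else 0

theorem vertex_mem_Icc {n : ℕ} (σ : Fin n → Bool) (i : Fin n) :
    vertex σ i ∈ Set.Icc (0 : ℝ) 1 := by
  unfold vertex
  split_ifs <;> simp

theorem schedulerValue_vertex_self {n : ℕ} (σ : Fin n → Bool) :
    schedulerValue n σ (vertex σ) = 1 :=
  Finset.prod_eq_one fun i _ => by cases h : σ i <;> simp [vertex, h]

theorem schedulerValue_vertex_of_ne {n : ℕ} {σ σ' : Fin n → Bool} (h : σ' ≠ σ) :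
    schedulerValue n σ' (vertex σ) = 0 := by
  obtain ⟨i, hi⟩ := Function.ne_iff.mp h
  refine Finset.prod_eq_zero (Finset.mem_univ i) ?_
  cases hσ : σ i <;> cases hσ' : σ' i <;> simp_all [vertex]

theorem exponential_moss_general (n : ℕ) :
    (∀ σ : Fin n → Bool, ∃ v : Fin n → ℝ,
      (∀ i, v i ∈ Set.Icc (0:ℝ) 1) ∧ schedulerValue n σ v = 1 ∧
      ∀ σ' : Fin n → Bool, σ' ≠ σ → schedulerValue n σ' v = 0) ∧
    (∀ Ω : Finset (Fin n → Bool),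
      (∀ v : Fin n → ℝ, (∀ i, v i ∈ Set.Icc (0:ℝ) 1) →
        ∃ σ ∈ Ω, ∀ σ' : Fin n → Bool, schedulerValue n σ' v ≤ schedulerValue n σ v) →
      Ω.card = 2 ^ n) := by
  have separating : ∀ σ : Fin n → Bool, ∃ v : Fin n → ℝ,
      (∀ i, v i ∈ Set.Icc (0:ℝ) 1) ∧ schedulerValue n σ v = 1 ∧
      ∀ σ' : Fin n → Bool, σ' ≠ σ → schedulerValue n σ' v = 0 := fun σ =>
    ⟨vertex σ, vertex_mem_Icc σ, schedulerValue_vertex_self σ,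
      fun _ h => schedulerValue_vertex_of_ne h⟩
  refine ⟨separating, fun Ω hΩ => ?_⟩
  have hstrict : ∀ σ, ∃ v : Fin n → ℝ, (∀ i, v i ∈ Set.Icc (0:ℝ) 1) ∧
      ∀ σ', σ' ≠ σ → schedulerValue n σ' v < schedulerValue n σ v := fun σ => by
    obtain ⟨v, hv, hone, hzero⟩ := separating σ
    exact ⟨v, hv, fun σ' h => by rw [hone, hzero σ' h]; exact one_pos⟩
  rw [Finset.eq_univ_of_forall_exists_strict_max _ _ hstrict Ω hΩ]
  simp

/-- Exponential lower bound on minimal optimal scheduler sets: each scheduler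
`σ` is the unique maximizer at some point of `[0,1]^n` (with value `1`, all
others having value `0`), hence any optimal scheduler set has all `2^n`
schedulers. -/
theorem exponential_moss (n : ℕ) (hn : 1 ≤ n) :
    (∀ σ : Fin n → Bool, ∃ v : Fin n → ℝ,
      (∀ i, v i ∈ Set.Icc (0:ℝ) 1) ∧ schedulerValue n σ v = 1 ∧
      ∀ σ' : Fin n → Bool, σ' ≠ σ → schedulerValue n σ' v = 0) ∧
    (∀ Ω : Finset (Fin n → Bool),
      (∀ v : Fin n → ℝ, (∀ i, v i ∈ Set.Icc (0:ℝ) 1) →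
        ∃ σ ∈ Ω, ∀ σ' : Fin n → Bool, schedulerValue n σ' v ≤ schedulerValue n σ v) →
      Ω.card = 2 ^ n) :=
  exponential_moss_general n
end
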